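/- If Q is a 2×2 real symmetric positive definite matrix, U a 2×2 real antisymmetric matrix, and W = diag(1, ω) with ω > 0, then T[W] := ‖√W Q⁻¹ U Q⁻¹ √W‖₁ / Tr[W Q⁻¹] equals 2√(ω · det U) / (Q₂₂ + ω Q₁₁), where det U = U₁₂² ≥ 0. -/

import Mathlib

open Matrix

open scoped ComplexOrder in
/-- the positive semidefinite square root, as `Matrix.PosSemidef.sqrt` was defined in the older Mathlib -/
noncomputable def psdSqrtOld {n 𝕜 : Type*} [Fintype n] [RCLike 𝕜] [DecidableEq n]
    {A : Matrix n n 𝕜} (hA : A.PosSemidef) : Matrix n n 𝕜 :=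
  hA.1.eigenvectorUnitary.1 * diagonal ((↑) ∘ (√·) ∘ hA.1.eigenvalues) *
  (star hA.1.eigenvectorUnitary : Matrix n n 𝕜)

open scoped ComplexOrder in
theorem psdSqrtOld_isHermitian {n 𝕜 : Type*} [Fintype n] [RCLike 𝕜] [DecidableEq n]
    {A : Matrix n n 𝕜} (hA : A.PosSemidef) : (psdSqrtOld hA).IsHermitian := by
  unfold psdSqrtOld
  rw [Matrix.star_eq_conjTranspose]
  apply isHermitian_mul_mul_conjTranspose
  apply isHermitian_diagonal_of_self_adjoint
  ext i
  simp

noncomputable def traceNorm {n : ℕ} (A : Matrix (Fin n) (Fin n) ℝ) : ℝ :=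
  (psdSqrtOld (Matrix.posSemidef_conjTranspose_mul_self A)).trace

noncomputable def singVals {n : ℕ} (A : Matrix (Fin n) (Fin n) ℝ) : Fin n → ℝ :=
  (psdSqrtOld_isHermitian (Matrix.posSemidef_conjTranspose_mul_self A)).eigenvalues

noncomputable def opNorm {n : ℕ} (A : Matrix (Fin n) (Fin n) ℝ) : ℝ :=
  ⨆ i, singVals A i

/-- the positive semidefinite square root, extended by `0` off psd matrices -/
noncomputable def mySqrt {n : ℕ} (A : Matrix (Fin n) (Fin n) ℝ) : Matrix (Fin n) (Fin n) ℝ :=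
  open Classical in
  if h : A.PosSemidef then psdSqrtOld h else 0

/-- the weight-dependent incompatibility measure `T[W]` -/
noncomputable def Tmeas {n : ℕ} (W Q U : Matrix (Fin n) (Fin n) ℝ) : ℝ :=
  traceNorm (mySqrt W * Q⁻¹ * U * Q⁻¹ * mySqrt W) / (W * Q⁻¹).trace

/-- the quantumness measure `R` -/
noncomputable def Rmeas {n : ℕ} (Q U : Matrix (Fin n) (Fin n) ℝ) : ℝ :=
  opNorm (mySqrt Q⁻¹ * U * mySqrt Q⁻¹)

/-! Every 2×2 matrix `A` satisfies `Aᵀ J A = det A • J` for the skew matrix `J`. Since `Q⁻¹` and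
`√W` are symmetric, `√W Q⁻¹ U Q⁻¹ √W = (Q⁻¹ √W)ᵀ U (Q⁻¹ √W)` is again skew, with entry
`u √ω / det Q`; a skew 2×2 matrix `c J` has `(c J)ᵀ (c J) = c² • 1`, so its trace norm is `2 |c|`.
The adjugate formula gives `Tr (W Q⁻¹) = (Q₂₂ + ω Q₁₁) / det Q`, and `det Q` cancels. -/

open scoped ComplexOrder MatrixOrder in
lemma psdSqrtOld_eq_cfcSqrt {n 𝕜 : Type*} [Fintype n] [RCLike 𝕜] [DecidableEq n]
    {A : Matrix n n 𝕜} (hA : A.PosSemidef) : psdSqrtOld hA = CFC.sqrt A := by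
  rw [CFC.sqrt_eq_real_sqrt A hA.nonneg, cfcₙ_eq_cfc, hA.1.cfc_eq, IsHermitian.cfc,
    Unitary.conjStarAlgAut_apply]
  rfl

open scoped ComplexOrder MatrixOrder in
lemma psdSqrtOld_eq_of_sq_eq {n 𝕜 : Type*} [Fintype n] [RCLike 𝕜] [DecidableEq n]
    {A B : Matrix n n 𝕜} (hA : A.PosSemidef) (hB : B.PosSemidef) (h : B ^ 2 = A) :
    psdSqrtOld hA = B := by
  rw [psdSqrtOld_eq_cfcSqrt]
  exact CFC.sqrt_unique (by rw [← h, sq]) hB.nonneg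

lemma mySqrt_diagonal {n : ℕ} {d : Fin n → ℝ} (hd : ∀ i, 0 ≤ d i) :
    mySqrt (diagonal d) = diagonal fun i ↦ √(d i) := by
  have hpsd : (diagonal d).PosSemidef := PosSemidef.diagonal hd
  rw [mySqrt, dif_pos hpsd]
  refine psdSqrtOld_eq_of_sq_eq hpsd (PosSemidef.diagonal fun i ↦ Real.sqrt_nonneg _) ?_
  simp [sq, diagonal_mul_diagonal, Real.mul_self_sqrt (hd _)]

lemma traceNorm_of_conjTranspose_mul_self_eq {n : ℕ} {A : Matrix (Fin n) (Fin n) ℝ} {c : ℝ}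
    (h : Aᴴ * A = c ^ 2 • 1) : traceNorm A = n * |c| := by
  have hpsd : (|c| • 1 : Matrix (Fin n) (Fin n) ℝ).PosSemidef :=
    PosSemidef.one.smul (abs_nonneg c)
  rw [traceNorm, psdSqrtOld_eq_of_sq_eq _ hpsd (by rw [h, smul_pow, one_pow, sq_abs]),
    trace_smul, trace_one, Fintype.card_fin, smul_eq_mul, mul_comm]

lemma traceNorm_skew_fin_two (c : ℝ) : traceNorm !![0, c; -c, 0] = 2 * |c| := by
  refine traceNorm_of_conjTranspose_mul_self_eq ?_
  ext i j
  fin_cases i <;> fin_cases j <;> simp [sq, mul_apply, Fin.sum_univ_two]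

lemma transpose_mul_skew_mul_fin_two {R : Type*} [CommRing R] (A : Matrix (Fin 2) (Fin 2) R)
    (u : R) : Aᵀ * !![0, u; -u, 0] * A = !![0, A.det * u; -(A.det * u), 0] := by
  ext i j
  fin_cases i <;> fin_cases j <;> simp [mul_apply, Fin.sum_univ_two, det_fin_two] <;> ring

lemma trace_diagonal_mul_inv_fin_two {K : Type*} [Field K] (A : Matrix (Fin 2) (Fin 2) K)
    (a b : K) : (diagonal ![a, b] * A⁻¹).trace = (a * A 1 1 + b * A 0 0) / A.det := by
  rw [inv_def, adjugate_fin_two, Ring.inverse_eq_inv']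
  simp [trace_fin_two]
  ring

/-- Explicit form of T[W] for the two-parameter model with W = diag(1, ω). -/
theorem Tmeas_two_param (Q : Matrix (Fin 2) (Fin 2) ℝ) (hQ : Q.PosDef)
    (u ω : ℝ) (hω : 0 < ω) :
    (Matrix.det !![0, u; -u, 0] = u ^ 2) ∧
    Tmeas !![1, 0; 0, ω] Q !![0, u; -u, 0] =
      2 * Real.sqrt (ω * Matrix.det !![0, u; -u, 0]) / (Q 1 1 + ω * Q 0 0) := by
  have hdetU : Matrix.det !![0, u; -u, 0] = u ^ 2 := by simp [det_fin_two_of, sq]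
  refine ⟨hdetU, ?_⟩
  set D : Matrix (Fin 2) (Fin 2) ℝ := diagonal ![1, √ω]
  have hsqrtW : mySqrt !![1, 0; 0, ω] = D := by
    rw [← diagonal_vec2, mySqrt_diagonal (by simp [Fin.forall_fin_two, hω.le])]
    simp [D]
  have hQinv : (Q⁻¹)ᵀ = Q⁻¹ := by
    rw [← conjTranspose_eq_transpose_of_trivial]; exact hQ.isHermitian.inv
  have hkernel : D * Q⁻¹ * !![0, u; -u, 0] * Q⁻¹ * D
      = !![0, √ω / Q.det * u; -(√ω / Q.det * u), 0] := by
    have hDQ : D * Q⁻¹ = (Q⁻¹ * D)ᵀ := by rw [transpose_mul, hQinv, diagonal_transpose]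
    rw [hDQ, Matrix.mul_assoc _ Q⁻¹ D, transpose_mul_skew_mul_fin_two, det_mul, det_nonsing_inv,
      Ring.inverse_eq_inv']
    simp [D, div_eq_inv_mul]
  rw [Tmeas, hsqrtW, hkernel, traceNorm_skew_fin_two, ← diagonal_vec2,
    trace_diagonal_mul_inv_fin_two, hdetU, one_mul, Real.sqrt_mul hω.le, Real.sqrt_sq_eq_abs,
    abs_mul, abs_div, abs_of_pos hQ.det_pos, abs_of_nonneg (Real.sqrt_nonneg ω)]
  field_simp [hQ.det_pos.ne']
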